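/- arXiv:2109.03051 — 3 statements merged into one kernel-verified Lean document; each statement's English description precedes it below -/
import Mathlib

section
/- Let f : ℝ → ℝ be a smooth periodic function such that the curve γ(t) = (f'(t), f(t)) is an immersion (i.e. (f''(t), f'(t)) ≠ (0,0) for all t). Then for every point x ∈ ℝ² not on the image of γ, the winding number (rotation number) of γ around x is nonnegative. -/
open Real Set ContDiff


lemma no_down_crossing {θ g : ℝ → ℝ} (hθ : ∀ t, HasDerivAt θ (g t) t)
    {a b L : ℝ} (hab : a ≤ b)
    (hpos : ∀ t, a ≤ t → t ≤ b → θ t = L → 0 < g t)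
    (ha : L < θ a) (hb : θ b < L) : False := by
  have hcont : Continuous θ := continuous_iff_continuousAt.mpr fun t => (hθ t).differentiableAt.continuousAt
  set S : Set ℝ := Icc a b ∩ θ ⁻¹' {L} with hS
  have hScomp : IsCompact S := isCompact_Icc.inter_right (isClosed_singleton.preimage hcont)
  have hSne : S.Nonempty := by
    obtain ⟨t₀, ht₀, hθt₀⟩ :=
      intermediate_value_Icc' hab hcont.continuousOn (⟨hb.le, ha.le⟩ : L ∈ Icc (θ b) (θ a))
    exact ⟨t₀, ht₀, hθt₀⟩
  obtain ⟨hsIcc, hsL⟩ := hScomp.sSup_mem hSne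
  set s := sSup S with hs
  have hsL' : θ s = L := hsL
  have hsb : s < b := lt_of_le_of_ne hsIcc.2 (fun h => absurd (h ▸ hsL') hb.ne)
  have hgs : 0 < g s := hpos s hsIcc.1 hsIcc.2 hsL'
  have hslope := hasDerivAt_iff_tendsto_slope.mp (hθ s)
  have hev : ∀ᶠ t in nhdsWithin s (Ioi s), 0 < slope θ s t :=
    (hslope.eventually (eventually_gt_nhds hgs)).filter_mono
      (nhdsWithin_mono s fun t ht => ne_of_gt ht)
  have hIoo : Ioo s b ∈ nhdsWithin s (Ioi s) := Ioo_mem_nhdsGT_of_mem ⟨le_refl s, hsb⟩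
  obtain ⟨t', ht'slope, (ht'Ioo : t' ∈ Ioo s b)⟩ := (hev.and (Filter.eventually_of_mem hIoo fun t ht => ht)).exists
  have hθt' : L < θ t' := by
    have h1 : 0 < θ t' - θ s := by
      have := mul_pos ht'slope (sub_pos.mpr ht'Ioo.1)
      rwa [slope_def_field, div_mul_cancel₀] at this
      exact sub_ne_zero.mpr (ne_of_gt ht'Ioo.1)
    linarith [hsL'.symm ▸ h1]
  obtain ⟨s', hs'Icc, hθs'⟩ :=
    intermediate_value_Icc' ht'Ioo.2.le hcont.continuousOn (⟨hb.le, hθt'.le⟩ : L ∈ Icc (θ b) (θ t'))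
  have hs'S : s' ∈ S := ⟨⟨hsIcc.1.trans (ht'Ioo.1.le.trans hs'Icc.1), hs'Icc.2⟩, hθs'⟩
  have : s' ≤ s := le_csSup hScomp.bddAbove hs'S
  exact absurd (ht'Ioo.1.trans_le hs'Icc.1) (not_lt.mpr this)

lemma winding_lower_bound {θ g : ℝ → ℝ} (hθ : ∀ t, HasDerivAt θ (g t) t)
    {T : ℝ} (hT : 0 < T)
    (hpos : ∀ t, 0 ≤ t → t ≤ T → (∃ m : ℤ, θ t = 2 * π * m) → 0 < g t) :
    θ 0 - θ T < 2 * π := by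
  by_contra hcon
  push_neg at hcon
  -- hcon : 2 * π ≤ θ 0 - θ T
  set m : ℤ := ⌈θ T / (2 * π)⌉ with hm
  have h2pi : (0:ℝ) < 2 * π := by positivity
  have hLge : θ T ≤ 2 * π * m := by
    rw [mul_comm]
    exact (div_le_iff₀ h2pi).mp (Int.le_ceil _)
  have hLlt : 2 * π * m < θ T + 2 * π := by
    have h := Int.ceil_lt_add_one (θ T / (2 * π))
    have h3 : 2 * π * (θ T / (2 * π)) = θ T := by field_simp
    nlinarith
  have hL0 : 2 * π * m < θ 0 := lt_of_lt_of_le hLlt (by linarith)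
  rcases lt_or_eq_of_le hLge with hlt | heq
  · exact no_down_crossing hθ hT.le (fun t h0 h1 ht => hpos t h0 h1 ⟨m, ht⟩) hL0 hlt
  · -- θ T = 2πm exactly; use positive derivative at T to find t' < T with θ t' < θ T
    have hgT : 0 < g T := hpos T hT.le le_rfl ⟨m, heq⟩
    have hslope := hasDerivAt_iff_tendsto_slope.mp (hθ T)
    have hev : ∀ᶠ t in nhdsWithin T (Set.Iio T), 0 < slope θ T t :=
      (hslope.eventually (eventually_gt_nhds hgT)).filter_mono
        (nhdsWithin_mono T fun t ht => ne_of_lt ht)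
    have hIoo : Set.Ioo 0 T ∈ nhdsWithin T (Set.Iio T) := Ioo_mem_nhdsLT_of_mem ⟨hT, le_rfl⟩
    obtain ⟨t', ht'slope, (ht'Ioo : t' ∈ Set.Ioo 0 T)⟩ :=
      (hev.and (Filter.eventually_of_mem hIoo fun t ht => ht)).exists
    have hθt' : θ t' < θ T := by
      have h1 : 0 < θ T - θ t' := by
        have h2 : 0 < slope θ T t' * (T - t') := by
          rcases lt_trichotomy t' T with h | h | h
          · exact mul_pos ht'slope (by linarith)
          · exact absurd h (ne_of_lt ht'Ioo.2)
          · exact absurd h (not_lt.mpr ht'Ioo.2.le)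
        rw [slope_def_field] at h2
        have h3 : (θ t' - θ T) / (t' - T) * (T - t') = θ T - θ t' := by
          rw [div_mul_eq_mul_div, div_eq_iff (sub_ne_zero.mpr (ne_of_lt ht'Ioo.2))]
          ring
        linarith [h3 ▸ h2]
      linarith
    exact no_down_crossing hθ ht'Ioo.1.le
      (fun t h0 h1 ht => hpos t h0 (h1.trans ht'Ioo.2.le) ⟨m, ht⟩) hL0
      (heq ▸ hθt')



/-- The winding number (rotation number) of a closed curve `γ` of period `T`
around a point `x` not on the curve, computed by the standard integral formula. -/
noncomputable def windingNumber (T : ℝ) (γ : ℝ → ℝ × ℝ) (x : ℝ × ℝ) : ℝ :=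
  (2 * Real.pi)⁻¹ * ∫ t in (0:ℝ)..T,
    (((γ t).1 - x.1) * deriv (fun s => (γ s).2) t -
      ((γ t).2 - x.2) * deriv (fun s => (γ s).1) t) /
    (((γ t).1 - x.1) ^ 2 + ((γ t).2 - x.2) ^ 2)

theorem stmt0 (f : ℝ → ℝ) (T : ℝ) (hT : 0 < T)
    (hf : ContDiff ℝ (⊤ : ℕ∞) f) (hper : Function.Periodic f T)
    (γ : ℝ → ℝ × ℝ) (hγ : γ = fun t => (deriv f t, f t))
    (himm : ∀ t : ℝ, (deriv (deriv f) t, deriv f t) ≠ (0, 0))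
    (x : ℝ × ℝ) (hx : x ∉ Set.range γ) :
    0 ≤ windingNumber T γ x := by
  subst hγ
  have hfi : ContDiff ℝ ∞ f := hf.of_le (by simp)
  obtain ⟨hdf, hf1⟩ := contDiff_infty_iff_deriv.mp hfi
  obtain ⟨hdf1, hf2⟩ := contDiff_infty_iff_deriv.mp hf1
  have hcf1 : Continuous (deriv f) := hdf1.continuous
  have hcf2 : Continuous (deriv (deriv f)) := hf2.continuous
  -- the complex curve and its derivative
  set c : ℝ → ℂ := fun t => (↑(deriv f t - x.1) + ↑(f t - x.2) * Complex.I : ℂ) with hc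
  set cd : ℝ → ℂ := fun t => (↑(deriv (deriv f) t) + ↑(deriv f t) * Complex.I : ℂ) with hcd
  have hcre : ∀ t, (c t).re = deriv f t - x.1 := by intro t; simp [hc]
  have hcim : ∀ t, (c t).im = f t - x.2 := by intro t; simp [hc]
  have hcne : ∀ t, c t ≠ 0 := by
    intro t h
    apply hx ⟨t, ?_⟩
    have h1 := hcre t; have h2 := hcim t
    rw [h] at h1 h2
    simp only [Complex.zero_re, Complex.zero_im] at h1 h2
    exact Prod.ext (by dsimp; linarith) (by dsimp; linarith)
  have hcderiv : ∀ t, HasDerivAt c (cd t) t := by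
    intro t
    have h1 : HasDerivAt (deriv f) (deriv (deriv f) t) t := (hdf1 t).hasDerivAt
    have h2 : HasDerivAt f (deriv f t) t := (hdf t).hasDerivAt
    exact ((h1.sub_const x.1).ofReal_comp).add
      (((h2.sub_const x.2).ofReal_comp).mul_const Complex.I)
  have hccont : Continuous c :=
    continuous_iff_continuousAt.mpr fun t => (hcderiv t).differentiableAt.continuousAt
  have hcdcont : Continuous cd :=
    (Complex.continuous_ofReal.comp hcf2).add
      ((Complex.continuous_ofReal.comp hcf1).mul continuous_const)
  -- the logarithmic derivative
  set g : ℝ → ℂ := fun t => cd t / c t with hg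
  have hgcont : Continuous g := hcdcont.div hccont hcne
  set L : ℝ → ℂ := fun t => ∫ s in (0:ℝ)..t, g s with hL
  have hLderiv : ∀ t, HasDerivAt L (g t) t := by
    intro t
    exact intervalIntegral.integral_hasDerivAt_right
      (hgcont.intervalIntegrable _ _)
      (hgcont.stronglyMeasurableAtFilter _ _)
      hgcont.continuousAt
  -- c t = c 0 * exp (L t)
  have hkey : ∀ t, c t = c 0 * Complex.exp (L t) := by
    have hconst : ∀ s t : ℝ, c s * Complex.exp (-L s) = c t * Complex.exp (-L t) := by
      have hd : ∀ t, HasDerivAt (fun s => c s * Complex.exp (-L s)) 0 t := by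
        intro t
        have he : HasDerivAt (fun s => Complex.exp (-L s)) (Complex.exp (-L t) * -g t) t :=
          ((hLderiv t).neg).cexp
        have := (hcderiv t).mul he
        convert this using 1
        all_goals try rfl
        have hct := hcne t
        have hgt : g t = cd t / c t := rfl
        rw [hgt]
        field_simp
        ring
      intro s t
      exact is_const_of_deriv_eq_zero
        (fun u => (hd u).differentiableAt) (fun u => (hd u).deriv) s t
    intro t
    have h0 : L 0 = 0 := intervalIntegral.integral_same
    have := hconst t 0
    rw [h0, neg_zero, Complex.exp_zero, mul_one] at this
    rw [← this, mul_assoc, ← Complex.exp_add, neg_add_cancel, Complex.exp_zero, mul_one]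
  -- periodicity : c T = c 0
  have hper1 : deriv f T = deriv f 0 := by
    have : (fun s => f (s + T)) = f := funext fun s => hper s
    have hd : deriv (fun s => f (s + T)) 0 = deriv f (0 + T) := by
      rw [deriv_comp_add_const]
    rw [this] at hd
    simpa using hd.symm
  have hcT : c T = c 0 := by
    have hfT : f T = f 0 := by simpa using hper 0
    simp [hc, hper1, hfT]
  have hexpT : Complex.exp (L T) = 1 := by
    have := (hkey T).symm.trans hcT
    nth_rewrite 2 [← mul_one (c 0)] at this
    exact mul_left_cancel₀ (hcne 0) this
  obtain ⟨n, hn⟩ := Complex.exp_eq_one_iff.mp hexpT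
  have hLTim : (L T).im = 2 * π * n := by
    rw [hn]; simp; ring
  -- the winding number equals n
  have hintg_im : ∀ t : ℝ,
      (((deriv f t, f t).1 - x.1) * deriv (fun s => ((deriv f s, f s)).2) t -
        ((deriv f t, f t).2 - x.2) * deriv (fun s => ((deriv f s, f s)).1) t) /
      (((deriv f t, f t).1 - x.1) ^ 2 + ((deriv f t, f t).2 - x.2) ^ 2) = (g t).im := by
    intro t
    have e1 : (fun s => ((deriv f s, f s)).1) = deriv f := rfl
    have e2 : (fun s => ((deriv f s, f s)).2) = f := rfl
    rw [e1, e2]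
    rw [hg]
    rw [Complex.div_im]
    simp only [hcd, hc, Complex.add_im, Complex.add_re, Complex.ofReal_re, Complex.ofReal_im,
      Complex.mul_im, Complex.mul_re, Complex.I_re, Complex.I_im, Complex.normSq_apply]
    ring
  have hwind : windingNumber T (fun t => (deriv f t, f t)) x = (2 * π)⁻¹ * (L T).im := by
    unfold windingNumber
    congr 1
    have h1 : (∫ t in (0:ℝ)..T,
        (((deriv f t, f t).1 - x.1) * deriv (fun s => ((deriv f s, f s)).2) t -
          ((deriv f t, f t).2 - x.2) * deriv (fun s => ((deriv f s, f s)).1) t) /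
        (((deriv f t, f t).1 - x.1) ^ 2 + ((deriv f t, f t).2 - x.2) ^ 2)) =
        ∫ t in (0:ℝ)..T, (g t).im := by
      apply intervalIntegral.integral_congr
      intro t _
      exact hintg_im t
    rw [h1]
    have h2 := Complex.imCLM.intervalIntegral_comp_comm (hgcont.intervalIntegrable (μ := MeasureTheory.volume) (0:ℝ) T)
    simpa using h2
  -- the angle function
  set θ : ℝ → ℝ := fun t => Complex.arg (c 0) + (L t).im with hθdef
  set a : ℝ := if 0 ≤ x.1 then 0 else π with ha
  have hθderiv : ∀ t, HasDerivAt (fun t => θ t - a) ((g t).im) t := by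
    intro t
    have him : HasDerivAt (fun t => (L t).im) ((g t).im) t :=
      Complex.imCLM.hasFDerivAt.comp_hasDerivAt t (hLderiv t)
    exact (him.const_add (Complex.arg (c 0))).sub_const a
  have hray : ∀ (t : ℝ) (m : ℤ), θ t = a + 2 * π * m →
      ∃ r : ℝ, 0 < r ∧ c t = ↑r * Complex.exp (↑a * Complex.I) := by
    intro t m hm
    refine ⟨‖c 0‖ * Real.exp ((L t).re),
      mul_pos (norm_pos_iff.mpr (hcne 0)) (Real.exp_pos _), ?_⟩
    calc c t = c 0 * Complex.exp (L t) := hkey t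
      _ = (↑(‖c 0‖) * Complex.exp (↑(Complex.arg (c 0)) * Complex.I)) *
          Complex.exp (↑((L t).re) + ↑((L t).im) * Complex.I) := by
            rw [Complex.norm_mul_exp_arg_mul_I, Complex.re_add_im]
      _ = ↑(‖c 0‖ * Real.exp ((L t).re)) *
          Complex.exp ((↑(Complex.arg (c 0)) + ↑((L t).im)) * Complex.I) := by
            rw [Complex.exp_add, add_mul, Complex.exp_add, Complex.ofReal_mul,
              Complex.ofReal_exp]
            ring
      _ = ↑(‖c 0‖ * Real.exp ((L t).re)) * Complex.exp (↑(θ t) * Complex.I) := by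
            rw [hθdef]; push_cast; ring_nf
      _ = ↑(‖c 0‖ * Real.exp ((L t).re)) * Complex.exp (↑a * Complex.I) := by
            rw [hm]
            congr 1
            have : ((↑(a + 2 * π * (m:ℝ)) : ℂ)) * Complex.I =
                ↑a * Complex.I + ↑m * (2 * ↑π * Complex.I) := by push_cast; ring
            rw [this, Complex.exp_add, Complex.exp_int_mul_two_pi_mul_I, mul_one]
  have hpos : ∀ t, 0 ≤ t → t ≤ T → (∃ m : ℤ, θ t - a = 2 * π * m) → 0 < (g t).im := by
    intro t _ _ ⟨m, hm⟩
    obtain ⟨r, hr, hcray⟩ := hray t m (by linarith)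
    rw [← hintg_im t]
    by_cases hx1 : 0 ≤ x.1
    · have haa : a = 0 := if_pos hx1
      rw [haa] at hcray
      simp only [Complex.ofReal_zero, zero_mul, Complex.exp_zero, mul_one] at hcray
      have hre : deriv f t - x.1 = r := by rw [← hcre t, hcray]; simp
      have him : f t - x.2 = 0 := by rw [← hcim t, hcray]; simp
      have hf1pos : 0 < deriv f t := by linarith
      rw [him]
      simp only [zero_mul, mul_zero, sub_zero]
      apply div_pos
      · nlinarith
      · nlinarith
    · have haa : a = π := if_neg hx1
      push_neg at hx1
      rw [haa] at hcray
      rw [Complex.exp_pi_mul_I] at hcray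
      have hre : deriv f t - x.1 = -r := by rw [← hcre t, hcray]; simp
      have him : f t - x.2 = 0 := by rw [← hcim t, hcray]; simp
      have hf1neg : deriv f t < 0 := by linarith
      rw [him]
      simp only [zero_mul, mul_zero, sub_zero]
      apply div_pos
      · nlinarith
      · nlinarith
  have hlb := winding_lower_bound hθderiv hT hpos
  -- hlb : (θ 0 - a) - (θ T - a) < 2 * π
  have hL0im : (L 0).im = 0 := by
    have h0 : L 0 = 0 := intervalIntegral.integral_same
    rw [h0]; rfl
  have hpi := Real.pi_pos
  have hnn : (0:ℝ) ≤ (n:ℝ) := by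
    have h1 : θ 0 - θ T = -(2 * π * n) := by
      rw [hθdef]; dsimp only; rw [hL0im, hLTim]; ring
    have h2 : (-1:ℝ) < (n:ℝ) := by nlinarith [hlb, h1]
    have h3 : (-1:ℤ) < n := by exact_mod_cast h2
    exact_mod_cast by omega
  rw [hwind, hLTim]
  apply mul_nonneg
  · positivity
  · positivity
end

section
/- Let f : ℝ → ℝ be a smooth periodic function and let γ(t) = (f''(t) − f(t), f'(t)). Then for every point x ∈ ℝ² not on the image of γ, the winding number of γ around x is nonnegative. -/
open Set Filter Topology Real MeasureTheory intervalIntegral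

lemma deriv_nonneg_of_right (φ : ℝ → ℝ) (d t : ℝ) (hd : HasDerivAt φ d t)
    (h0 : φ t = 0) (h : ∀ᶠ u in 𝓝[>] t, 0 ≤ φ u) : 0 ≤ d := by
  have h1 : Tendsto (slope φ t) (𝓝[≠] t) (𝓝 d) := hasDerivAt_iff_tendsto_slope.mp hd
  have h2 : Tendsto (slope φ t) (𝓝[>] t) (𝓝 d) :=
    h1.mono_left (nhdsWithin_mono t fun x hx => ne_of_gt hx)
  refine ge_of_tendsto h2 ?_
  filter_upwards [h, self_mem_nhdsWithin] with u hu hut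
  rw [slope_def_field, h0, sub_zero]
  have : (t : ℝ) < u := hut
  exact div_nonneg hu (by linarith)

lemma deriv_nonneg_of_left (φ : ℝ → ℝ) (d t : ℝ) (hd : HasDerivAt φ d t)
    (h0 : φ t = 0) (h : ∀ᶠ u in 𝓝[<] t, φ u ≤ 0) : 0 ≤ d := by
  have h1 : Tendsto (slope φ t) (𝓝[≠] t) (𝓝 d) := hasDerivAt_iff_tendsto_slope.mp hd
  have h2 : Tendsto (slope φ t) (𝓝[<] t) (𝓝 d) :=
    h1.mono_left (nhdsWithin_mono t fun x hx => ne_of_lt hx)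
  refine ge_of_tendsto h2 ?_
  filter_upwards [h, self_mem_nhdsWithin] with u hu hut
  rw [slope_def_field, h0, sub_zero]
  have : u < t := hut
  exact div_nonneg_of_nonpos hu (by linarith)

lemma noBadUp (g g1 g2 : ℝ → ℝ) (hg1 : ∀ t, HasDerivAt g (g1 t) t)
    (hg2 : ∀ t, HasDerivAt g1 (g2 t) t) (v : ℝ) (hv : 0 ≤ v) (t₁ t₂ : ℝ) (h12 : t₁ < t₂)
    (hb1 : g1 t₁ = v) (hb2 : g1 t₂ = v) (hbp : ∀ t ∈ Set.Ioo t₁ t₂, v < g1 t)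
    (ha1 : g2 t₁ < g t₁) (ha2 : g t₂ < g2 t₂) : False := by
  have h21 : 0 ≤ g2 t₁ := by
    refine deriv_nonneg_of_right (fun t => g1 t - v) (g2 t₁) t₁ ((hg2 t₁).sub_const v)
      (by simp [hb1]) ?_
    filter_upwards [Ioo_mem_nhdsGT h12] with u hu
    have := hbp u hu; simp; linarith
  have h22 : g2 t₂ ≤ 0 := by
    have h := deriv_nonneg_of_left (fun t => v - g1 t) (-(g2 t₂)) t₂ ((hg2 t₂).const_sub v)
      (by simp [hb2]) ?_
    · linarith
    filter_upwards [Ioo_mem_nhdsLT h12] with u hu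
    have := hbp u hu; simp; linarith
  have hmono : StrictMonoOn g (Set.Icc t₁ t₂) := by
    refine strictMonoOn_of_deriv_pos (convex_Icc _ _)
      (fun t _ => (hg1 t).continuousAt.continuousWithinAt) ?_
    intro t ht
    rw [interior_Icc] at ht
    rw [(hg1 t).deriv]
    have := hbp t ht; linarith
  have := hmono (Set.left_mem_Icc.mpr h12.le) (Set.right_mem_Icc.mpr h12.le) h12
  linarith

lemma noBadDown (g g1 g2 : ℝ → ℝ) (hg1 : ∀ t, HasDerivAt g (g1 t) t)
    (hg2 : ∀ t, HasDerivAt g1 (g2 t) t) (v : ℝ) (hv : v ≤ 0) (t₁ t₂ : ℝ) (h12 : t₁ < t₂)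
    (hb1 : g1 t₁ = v) (hb2 : g1 t₂ = v) (hbn : ∀ t ∈ Set.Ioo t₁ t₂, g1 t < v)
    (ha1 : g t₁ < g2 t₁) (ha2 : g2 t₂ < g t₂) : False :=
  noBadUp (fun t => -g t) (fun t => -g1 t) (fun t => -g2 t)
    (fun t => (hg1 t).neg) (fun t => (hg2 t).neg) (-v) (neg_nonneg.mpr hv) t₁ t₂ h12
    (by simp [hb1]) (by simp [hb2]) (fun t ht => neg_lt_neg (hbn t ht))
    (neg_lt_neg ha1) (neg_lt_neg ha2)

lemma periodic_deriv' (f : ℝ → ℝ) (T : ℝ) (h : Function.Periodic f T) :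
    Function.Periodic (deriv f) T := by
  intro t
  have h2 : (fun x => f (x + T)) = f := funext h
  calc deriv f (t + T) = deriv (fun x => f (x + T)) t := (deriv_comp_add_const f T t).symm
  _ = deriv f t := by rw [h2]

lemma polar_re (r θ : ℝ) : ((r:ℂ) * Complex.exp ((θ:ℂ) * Complex.I)).re = r * Real.cos θ := by
  rw [Complex.exp_mul_I]
  simp [Complex.mul_re, Complex.add_re, Complex.add_im, Complex.mul_im,
    Complex.cos_ofReal_re, Complex.sin_ofReal_re, Complex.cos_ofReal_im, Complex.sin_ofReal_im]

lemma polar_im (r θ : ℝ) : ((r:ℂ) * Complex.exp ((θ:ℂ) * Complex.I)).im = r * Real.sin θ := by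
  rw [Complex.exp_mul_I]
  simp [Complex.mul_re, Complex.add_re, Complex.add_im, Complex.mul_im,
    Complex.cos_ofReal_re, Complex.sin_ofReal_re, Complex.cos_ofReal_im, Complex.sin_ofReal_im]

lemma descend (Θ : ℝ → ℝ) (hΘc : Continuous Θ) (L : ℝ) (hL : 0 < L) (c d : ℝ) (hcd : c < d)
    (hA : Θ L ≤ c) (hB : d ≤ Θ 0) :
    ∃ t₁ t₂ : ℝ, 0 ≤ t₁ ∧ t₁ < t₂ ∧ t₂ ≤ L ∧ Θ t₁ = d ∧ Θ t₂ = c ∧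
      ∀ t ∈ Set.Ioo t₁ t₂, c < Θ t ∧ Θ t < d := by
  set S₂ : Set ℝ := Set.Icc 0 L ∩ {t | Θ t ≤ c} with hS₂
  have hS₂cl : IsClosed S₂ := isClosed_Icc.inter (isClosed_le hΘc continuous_const)
  have hS₂ne : S₂.Nonempty := ⟨L, ⟨hL.le, le_refl L⟩, hA⟩
  have hS₂bd : BddBelow S₂ := (bddBelow_Icc : BddBelow (Set.Icc (0:ℝ) L)).mono inter_subset_left
  set t₂ := sInf S₂ with ht₂Def
  have ht₂S : t₂ ∈ S₂ := hS₂cl.csInf_mem hS₂ne hS₂bd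
  have ht₂Icc : t₂ ∈ Set.Icc 0 L := ht₂S.1
  have ht₂le : Θ t₂ ≤ c := ht₂S.2
  have hbefore : ∀ t, 0 ≤ t → t < t₂ → c < Θ t := by
    intro t h0 hlt
    by_contra hle
    push_neg at hle
    exact absurd (csInf_le hS₂bd ⟨⟨h0, hlt.le.trans ht₂Icc.2⟩, hle⟩) (not_le.mpr hlt)
  have ht₂pos : 0 < t₂ := by
    rcases eq_or_lt_of_le ht₂Icc.1 with h | h
    · exfalso; rw [← h] at ht₂le; linarith
    · exact h
  have ht₂eq : Θ t₂ = c := by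
    refine le_antisymm ht₂le ?_
    by_contra hlt
    push_neg at hlt
    have hsub := intermediate_value_Ioo' ht₂Icc.1 (hΘc.continuousOn (s := Set.Icc 0 t₂))
    have hmem : c ∈ Set.Ioo (Θ t₂) (Θ 0) := ⟨hlt, lt_of_lt_of_le hcd hB⟩
    obtain ⟨t', ht'mem, ht'eq⟩ := hsub hmem
    exact absurd ht'eq (ne_of_gt (hbefore t' ht'mem.1.le ht'mem.2))
  set S₁ : Set ℝ := Set.Icc 0 t₂ ∩ {t | d ≤ Θ t} with hS₁
  have hS₁cl : IsClosed S₁ := isClosed_Icc.inter (isClosed_le continuous_const hΘc)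
  have hS₁ne : S₁.Nonempty := ⟨0, ⟨le_refl 0, ht₂pos.le⟩, hB⟩
  have hS₁bd : BddAbove S₁ := (bddAbove_Icc (a := (0:ℝ)) (b := t₂)).mono inter_subset_left
  set t₁ := sSup S₁ with ht₁Def
  have ht₁S : t₁ ∈ S₁ := hS₁cl.csSup_mem hS₁ne hS₁bd
  have ht₁Icc : t₁ ∈ Set.Icc 0 t₂ := ht₁S.1
  have ht₁ge : d ≤ Θ t₁ := ht₁S.2
  have hafter : ∀ t, t₁ < t → t ≤ t₂ → Θ t < d := by
    intro t hgt hle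
    by_contra hge
    push_neg at hge
    exact absurd (le_csSup hS₁bd ⟨⟨ht₁Icc.1.trans hgt.le, hle⟩, hge⟩) (not_le.mpr hgt)
  have ht₁lt : t₁ < t₂ := by
    rcases eq_or_lt_of_le ht₁Icc.2 with h | h
    · exfalso; rw [h] at ht₁ge; rw [ht₂eq] at ht₁ge; linarith
    · exact h
  have ht₁eq : Θ t₁ = d := by
    refine le_antisymm ?_ ht₁ge
    by_contra hlt
    push_neg at hlt
    have hsub := intermediate_value_Ioo' ht₁lt.le (hΘc.continuousOn (s := Set.Icc t₁ t₂))
    have hmem : d ∈ Set.Ioo (Θ t₂) (Θ t₁) := ⟨by rw [ht₂eq]; exact hcd, hlt⟩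
    obtain ⟨t', ht'mem, ht'eq⟩ := hsub hmem
    exact absurd ht'eq (ne_of_lt (hafter t' ht'mem.1 ht'mem.2.le))
  refine ⟨t₁, t₂, ht₁Icc.1, ht₁lt, ht₂Icc.2, ht₁eq, ht₂eq, ?_⟩
  intro t ht
  exact ⟨hbefore t (ht₁Icc.1.trans ht.1.le) ht.2, hafter t ht.1 ht.2.le⟩

lemma my_intervalIntegral_im (f : ℝ → ℂ) (a b : ℝ)
    (h : IntervalIntegrable f MeasureTheory.volume a b) :
    (∫ t in a..b, f t).im = ∫ t in a..b, (f t).im := by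
  rw [intervalIntegral_eq_integral_uIoc, intervalIntegral_eq_integral_uIoc]
  have him : (∫ x in Set.uIoc a b, f x).im = ∫ x in Set.uIoc a b, (f x).im := by
    have := _root_.integral_im (μ := MeasureTheory.volume.restrict (Set.uIoc a b)) h.def'
    rw [RCLike.im_eq_complex_im] at this
    exact this.symm
  split_ifs
  · simp only [one_smul, him]
  · simp only [neg_smul, one_smul, Complex.neg_im, him]

set_option maxHeartbeats 1000000 in
lemma winding_core (f f1 f2 f3 : ℝ → ℝ) (x1 x2 T : ℝ) (hT : 0 < T)
    (hd0 : ∀ t, HasDerivAt f (f1 t) t) (hd1 : ∀ t, HasDerivAt f1 (f2 t) t)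
    (hd2 : ∀ t, HasDerivAt f2 (f3 t) t) (hc3 : Continuous f3)
    (hpf : Function.Periodic f T) (hp1 : Function.Periodic f1 T)
    (hp2 : Function.Periodic f2 T) (hp3 : Function.Periodic f3 T)
    (hne : ∀ t, ¬(f2 t - f t = x1 ∧ f1 t = x2)) :
    0 ≤ ∫ t in (0:ℝ)..T,
      ((f2 t - f t - x1) * f2 t - (f1 t - x2) * (f3 t - f1 t)) /
        ((f2 t - f t - x1) ^ 2 + (f1 t - x2) ^ 2) := by
  have hc0 : Continuous f := continuous_iff_continuousAt.mpr fun t => (hd0 t).continuousAt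
  have hc1 : Continuous f1 := continuous_iff_continuousAt.mpr fun t => (hd1 t).continuousAt
  have hc2 : Continuous f2 := continuous_iff_continuousAt.mpr fun t => (hd2 t).continuousAt
  set a : ℝ → ℝ := fun t => f2 t - f t - x1 with haDef
  set b : ℝ → ℝ := fun t => f1 t - x2 with hbDef
  set z : ℝ → ℂ := fun t => (a t : ℂ) + (b t : ℂ) * Complex.I with hzDef
  set zd : ℝ → ℂ := fun t => ((f3 t - f1 t : ℝ) : ℂ) + ((f2 t : ℝ) : ℂ) * Complex.I with hzdDef
  have hzre : ∀ t, (z t).re = a t := by intro t; simp [hzDef]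
  have hzim : ∀ t, (z t).im = b t := by intro t; simp [hzDef]
  have hz0 : ∀ t, z t ≠ 0 := by
    intro t h
    refine hne t ⟨?_, ?_⟩
    · have := congrArg Complex.re h; rw [hzre t] at this; simp [haDef] at this; linarith
    · have := congrArg Complex.im h; rw [hzim t] at this; simp [hbDef] at this; linarith
  have hza' : ∀ t, HasDerivAt a (f3 t - f1 t) t := fun t => ((hd2 t).sub (hd0 t)).sub_const x1
  have hzb' : ∀ t, HasDerivAt b (f2 t) t := fun t => (hd1 t).sub_const x2
  have hz' : ∀ t, HasDerivAt z (zd t) t := fun t =>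
    ((hza' t).ofReal_comp).add (((hzb' t).ofReal_comp).mul_const Complex.I)
  have hzc : Continuous z := continuous_iff_continuousAt.mpr fun t => (hz' t).continuousAt
  have hzdc : Continuous zd :=
    (Complex.continuous_ofReal.comp (hc3.sub hc1)).add
      ((Complex.continuous_ofReal.comp hc2).mul continuous_const)
  set φ : ℝ → ℂ := fun t => zd t / z t with hφDef
  have hφc : Continuous φ := hzdc.div hzc hz0
  set F : ℝ → ℂ := fun τ => ∫ t in (0:ℝ)..τ, φ t with hFDef
  have hFd : ∀ τ, HasDerivAt F (φ τ) τ := fun τ =>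
    intervalIntegral.integral_hasDerivAt_right (hφc.intervalIntegrable 0 τ)
      hφc.stronglyMeasurable.stronglyMeasurableAtFilter hφc.continuousAt
  have hF0 : F 0 = 0 := intervalIntegral.integral_same
  -- z t = z 0 * exp (F t)
  have hzF : ∀ t, z t = z 0 * Complex.exp (F t) := by
    have hGd : ∀ t, HasDerivAt (fun u => z u * Complex.exp (-F u)) 0 t := by
      intro t
      have h1 : HasDerivAt (fun u => Complex.exp (-F u)) (Complex.exp (-F t) * (-φ t)) t :=
        ((hFd t).neg).cexp
      have h2 : HasDerivAt (fun u => z u * Complex.exp (-F u)) _ t := (hz' t).mul h1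
      convert h2 using 1
      rw [hφDef]
      field_simp [hz0 t]
      ring
    have hconst : ∀ t, z t * Complex.exp (-F t) = z 0 := by
      intro t
      have := _root_.is_const_of_deriv_eq_zero (f := fun u => z u * Complex.exp (-F u))
        (fun u => (hGd u).differentiableAt) (fun u => (hGd u).deriv) t 0
      simpa [hF0] using this
    intro t
    have h := hconst t
    rw [Complex.exp_neg] at h
    field_simp at h
    linear_combination h
  -- periodicity
  have hzper : Function.Periodic z T := by
    intro t; simp only [hzDef, haDef, hbDef]; rw [hpf t, hp1 t, hp2 t]
  have hφper : Function.Periodic φ T := by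
    intro t; simp only [hφDef, hzdDef, hzDef, haDef, hbDef]
    rw [hpf t, hp1 t, hp2 t, hp3 t]
  -- F T = 2πi n
  have hexp1 : Complex.exp (F T) = 1 := by
    have h1 : z T = z 0 := by have := hzper 0; rwa [zero_add] at this
    have h2 := hzF T
    rw [h1] at h2
    have h3 : z 0 * Complex.exp (F T) = z 0 * 1 := by rw [mul_one]; exact h2.symm
    exact mul_left_cancel₀ (hz0 0) h3
  obtain ⟨n, hn⟩ := Complex.exp_eq_one_iff.mp hexp1
  have hFTim : (F T).im = n * (2 * π) := by
    rw [hn]; simp [Complex.mul_im]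
  -- the target integral equals (F T).im
  have him : ∀ t, (φ t).im = (a t * f2 t - b t * (f3 t - f1 t)) / (a t ^ 2 + b t ^ 2) := by
    intro t
    have hD : a t ^ 2 + b t ^ 2 ≠ 0 := by
      have h := hz0 t
      intro hD
      have ha0 : a t = 0 := by nlinarith [sq_nonneg (a t), sq_nonneg (b t)]
      have hb0 : b t = 0 := by nlinarith [sq_nonneg (a t), sq_nonneg (b t)]
      apply h
      rw [hzDef]; simp [ha0, hb0]
    rw [hφDef, Complex.div_im]
    have h1 : Complex.normSq (z t) = a t ^ 2 + b t ^ 2 := by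
      rw [hzDef]; simp; exact Complex.normSq_add_mul_I _ _
    have h2 : (zd t).im = f2 t := by simp [hzdDef]
    have h3 : (zd t).re = f3 t - f1 t := by simp [hzdDef]
    rw [h1, h2, h3, hzre, hzim]
    field_simp
  have hInt : (∫ t in (0:ℝ)..T,
      ((f2 t - f t - x1) * f2 t - (f1 t - x2) * (f3 t - f1 t)) /
        ((f2 t - f t - x1) ^ 2 + (f1 t - x2) ^ 2)) = (F T).im := by
    rw [hFDef]
    rw [my_intervalIntegral_im φ 0 T (hφc.intervalIntegrable 0 T)]
    apply intervalIntegral.integral_congr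
    intro t _
    simp only
    rw [him t, haDef, hbDef]
  rw [hInt, hFTim]
  rcases le_or_gt 0 (n:ℝ) with hn0 | hn0
  · exact mul_nonneg hn0 (by positivity)
  exfalso
  have hpi := Real.pi_pos
  have hn1 : (n:ℝ) ≤ -1 := by
    have h1 : n < 0 := by exact_mod_cast hn0
    have h2 : n ≤ -1 := by omega
    exact_mod_cast h2
  have hFc : Continuous F := continuous_iff_continuousAt.mpr fun τ => (hFd τ).continuousAt
  set Θ : ℝ → ℝ := fun t => (z 0).arg + (F t).im with hΘDef
  have hΘc : Continuous Θ := continuous_const.add (Complex.continuous_im.comp hFc)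
  set R : ℝ → ℝ := fun t => ‖z 0‖ * Real.exp ((F t).re) with hRDef
  have hRpos : ∀ t, 0 < R t := fun t =>
    mul_pos (norm_pos_iff.mpr (hz0 0)) (Real.exp_pos _)
  have hpolar : ∀ t, z t = (R t : ℂ) * Complex.exp ((Θ t : ℂ) * Complex.I) := by
    intro t
    rw [hzF t]
    conv_lhs => rw [← Complex.norm_mul_exp_arg_mul_I (z 0), ← Complex.re_add_im (F t)]
    rw [Complex.exp_add]
    simp only [hRDef, hΘDef]
    push_cast
    rw [add_mul, Complex.exp_add]
    ring
  have haR : ∀ t, a t = R t * Real.cos (Θ t) := by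
    intro t; rw [← hzre t, hpolar t, polar_re]
  have hbR : ∀ t, b t = R t * Real.sin (Θ t) := by
    intro t; rw [← hzim t, hpolar t, polar_im]
  have hΘ0 : Θ 0 = (z 0).arg := by simp [hΘDef, hF0]
  have hF2T : F (2*T) = F T + F T := by
    have hshift : (∫ t in T..(T+T), φ t) = ∫ t in (0:ℝ)..(0+T), φ t :=
      hφper.intervalIntegral_add_eq T 0
    have hsplit := intervalIntegral.integral_add_adjacent_intervals
      (μ := MeasureTheory.volume) (hφc.intervalIntegrable 0 T) (hφc.intervalIntegrable T (2*T))
    have h2T : 2*T = T + T := two_mul T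
    calc F (2*T) = ∫ t in (0:ℝ)..(2*T), φ t := rfl
    _ = (∫ t in (0:ℝ)..T, φ t) + ∫ t in T..(2*T), φ t := hsplit.symm
    _ = F T + F T := by rw [h2T, hshift, zero_add]
  have hΘ2T : Θ (2*T) = (z 0).arg + ((n:ℝ) * (2*π) + (n:ℝ) * (2*π)) := by
    simp only [hΘDef, hF2T, Complex.add_im, hFTim]
  have hdrop : Θ 0 - Θ (2*T) ≥ 4*π := by
    rw [hΘ0, hΘ2T]; nlinarith
  -- the common band-descent construction, parameterized by the chosen integer k and parity
  rcases le_or_gt 0 x2 with hx2 | hx2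
  · -- x2 ≥ 0 : descend through an upper band (2kπ, (2k+1)π)
    set k : ℤ := ⌈Θ (2*T) / (2*π)⌉ with hkDef
    have hk1 : Θ (2*T) ≤ 2*(k:ℝ) * π := by
      have h1 := Int.le_ceil (Θ (2*T) / (2*π))
      have h2 : Θ (2*T) / (2*π) * (2*π) ≤ (k:ℝ) * (2*π) :=
        mul_le_mul_of_nonneg_right h1 (by positivity)
      rw [div_mul_cancel₀ _ (by positivity : (2*π : ℝ) ≠ 0)] at h2
      linarith
    have hk2 : (2*(k:ℝ)+1) * π ≤ Θ 0 := by
      have h1 := Int.ceil_lt_add_one (Θ (2*T) / (2*π))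
      have h2 : (k:ℝ) * (2*π) < (Θ (2*T) / (2*π) + 1) * (2*π) :=
        mul_lt_mul_of_pos_right h1 (by positivity)
      rw [add_mul, div_mul_cancel₀ _ (by positivity : (2*π : ℝ) ≠ 0)] at h2
      nlinarith
    obtain ⟨t₁, t₂, ht₁0, ht₁₂, ht₂L, hΘt₁, hΘt₂, hband⟩ :=
      descend Θ hΘc (2*T) (by linarith) (2*(k:ℝ)*π) ((2*(k:ℝ)+1)*π) (by nlinarith) hk1 hk2
    have hsin1 : Real.sin (Θ t₁) = 0 := by
      rw [hΘt₁, show (2*(k:ℝ)+1)*π = ((2*k+1 : ℤ):ℝ)*π by push_cast; ring,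
        Real.sin_int_mul_pi]
    have hsin2 : Real.sin (Θ t₂) = 0 := by
      rw [hΘt₂, show 2*(k:ℝ)*π = ((2*k : ℤ):ℝ)*π by push_cast; ring, Real.sin_int_mul_pi]
    have hcos1 : Real.cos (Θ t₁) = -1 := by
      rw [hΘt₁, show (2*(k:ℝ)+1)*π = (k:ℝ)*(2*π) + π by ring]
      exact_mod_cast Real.cos_int_mul_two_pi_add_pi k
    have hcos2 : Real.cos (Θ t₂) = 1 := by
      rw [hΘt₂, show 2*(k:ℝ)*π = (k:ℝ)*(2*π) by ring]
      exact_mod_cast Real.cos_int_mul_two_pi k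
    have hsinpos : ∀ t ∈ Set.Ioo t₁ t₂, 0 < Real.sin (Θ t) := by
      intro t ht
      obtain ⟨hgt, hlt⟩ := hband t ht
      have heq : Real.sin (Θ t) = Real.sin (Θ t - (k:ℝ)*(2*π)) := by
        conv_lhs => rw [show Θ t = (Θ t - (k:ℝ)*(2*π)) + (k:ℝ)*(2*π) by ring]
        exact_mod_cast Real.sin_add_int_mul_two_pi (Θ t - (k:ℝ)*(2*π)) k
      rw [heq]
      apply Real.sin_pos_of_pos_of_lt_pi <;> nlinarith
    have hb1 : f1 t₁ = x2 := by
      have h := hbR t₁; rw [hsin1, mul_zero] at h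
      simp only [hbDef] at h; linarith
    have hb2 : f1 t₂ = x2 := by
      have h := hbR t₂; rw [hsin2, mul_zero] at h
      simp only [hbDef] at h; linarith
    have hbp : ∀ t ∈ Set.Ioo t₁ t₂, x2 < f1 t := by
      intro t ht
      have h := hbR t
      have := mul_pos (hRpos t) (hsinpos t ht)
      simp only [hbDef] at h; linarith
    have ha1 : f2 t₁ < f t₁ + x1 := by
      have h := haR t₁; rw [hcos1] at h
      have := hRpos t₁
      simp only [haDef] at h; linarith
    have ha2 : f t₂ + x1 < f2 t₂ := by
      have h := haR t₂; rw [hcos2] at h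
      have := hRpos t₂
      simp only [haDef] at h; linarith
    exact noBadUp (fun t => f t + x1) f1 f2 (fun t => (hd0 t).add_const x1) hd1 x2 hx2
      t₁ t₂ ht₁₂ hb1 hb2 hbp ha1 ha2
  · -- x2 < 0 : descend through a lower band ((2k+1)π, (2k+2)π)
    set k : ℤ := ⌈(Θ (2*T) - π) / (2*π)⌉ with hkDef
    have hk1 : Θ (2*T) ≤ (2*(k:ℝ)+1) * π := by
      have h1 := Int.le_ceil ((Θ (2*T) - π) / (2*π))
      have h2 : (Θ (2*T) - π) / (2*π) * (2*π) ≤ (k:ℝ) * (2*π) :=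
        mul_le_mul_of_nonneg_right h1 (by positivity)
      rw [div_mul_cancel₀ _ (by positivity : (2*π : ℝ) ≠ 0)] at h2
      linarith
    have hk2 : (2*(k:ℝ)+2) * π ≤ Θ 0 := by
      have h1 := Int.ceil_lt_add_one ((Θ (2*T) - π) / (2*π))
      have h2 : (k:ℝ) * (2*π) < ((Θ (2*T) - π) / (2*π) + 1) * (2*π) :=
        mul_lt_mul_of_pos_right h1 (by positivity)
      rw [add_mul, div_mul_cancel₀ _ (by positivity : (2*π : ℝ) ≠ 0)] at h2
      nlinarith
    obtain ⟨t₁, t₂, ht₁0, ht₁₂, ht₂L, hΘt₁, hΘt₂, hband⟩ :=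
      descend Θ hΘc (2*T) (by linarith) ((2*(k:ℝ)+1)*π) ((2*(k:ℝ)+2)*π) (by nlinarith) hk1 hk2
    have hsin1 : Real.sin (Θ t₁) = 0 := by
      rw [hΘt₁, show (2*(k:ℝ)+2)*π = ((2*k+2 : ℤ):ℝ)*π by push_cast; ring,
        Real.sin_int_mul_pi]
    have hsin2 : Real.sin (Θ t₂) = 0 := by
      rw [hΘt₂, show (2*(k:ℝ)+1)*π = ((2*k+1 : ℤ):ℝ)*π by push_cast; ring,
        Real.sin_int_mul_pi]
    have hcos1 : Real.cos (Θ t₁) = 1 := by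
      rw [hΘt₁, show (2*(k:ℝ)+2)*π = ((k:ℝ)+1)*(2*π) by ring]
      exact_mod_cast Real.cos_int_mul_two_pi (k+1)
    have hcos2 : Real.cos (Θ t₂) = -1 := by
      rw [hΘt₂, show (2*(k:ℝ)+1)*π = (k:ℝ)*(2*π) + π by ring]
      exact_mod_cast Real.cos_int_mul_two_pi_add_pi k
    have hsinneg : ∀ t ∈ Set.Ioo t₁ t₂, Real.sin (Θ t) < 0 := by
      intro t ht
      obtain ⟨hgt, hlt⟩ := hband t ht
      have heq : Real.sin (Θ t) = Real.sin (Θ t - ((k:ℝ)+1)*(2*π)) := by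
        conv_lhs => rw [show Θ t = (Θ t - ((k:ℝ)+1)*(2*π)) + ((k:ℝ)+1)*(2*π) by ring]
        exact_mod_cast Real.sin_add_int_mul_two_pi (Θ t - ((k:ℝ)+1)*(2*π)) (k+1)
      rw [heq]
      apply Real.sin_neg_of_neg_of_neg_pi_lt <;> nlinarith
    have hb1 : f1 t₁ = x2 := by
      have h := hbR t₁; rw [hsin1, mul_zero] at h
      simp only [hbDef] at h; linarith
    have hb2 : f1 t₂ = x2 := by
      have h := hbR t₂; rw [hsin2, mul_zero] at h
      simp only [hbDef] at h; linarith
    have hbn : ∀ t ∈ Set.Ioo t₁ t₂, f1 t < x2 := by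
      intro t ht
      have h := hbR t
      have := mul_neg_of_pos_of_neg (hRpos t) (hsinneg t ht)
      simp only [hbDef] at h; linarith
    have ha1 : f t₁ + x1 < f2 t₁ := by
      have h := haR t₁; rw [hcos1] at h
      have := hRpos t₁
      simp only [haDef] at h; linarith
    have ha2 : f2 t₂ < f t₂ + x1 := by
      have h := haR t₂; rw [hcos2] at h
      have := hRpos t₂
      simp only [haDef] at h; linarith
    exact noBadDown (fun t => f t + x1) f1 f2 (fun t => (hd0 t).add_const x1) hd1 x2 hx2.le
      t₁ t₂ ht₁₂ hb1 hb2 hbn ha1 ha2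

theorem stmt1 (f : ℝ → ℝ) (T : ℝ) (hT : 0 < T)
    (hf : ContDiff ℝ (⊤ : ℕ∞) f) (hper : Function.Periodic f T)
    (γ : ℝ → ℝ × ℝ) (hγ : γ = fun t => (deriv (deriv f) t - f t, deriv f t))
    (himm : ∀ t : ℝ, deriv γ t ≠ 0)
    (x : ℝ × ℝ) (hx : x ∉ Set.range γ) :
    0 ≤ windingNumber T γ x := by
  subst hγ
  have hf0 : ContDiff ℝ ((⊤ : ℕ∞) : WithTop ℕ∞) f := hf.of_le (by simp)
  have hdf : Differentiable ℝ f := hf0.differentiable (by simp)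
  have hf1 : ContDiff ℝ ((⊤ : ℕ∞) : WithTop ℕ∞) (deriv f) := (contDiff_infty_iff_deriv.mp hf0).2
  have hf2 : ContDiff ℝ ((⊤ : ℕ∞) : WithTop ℕ∞) (deriv (deriv f)) :=
    (contDiff_infty_iff_deriv.mp hf1).2
  have hf3 : ContDiff ℝ ((⊤ : ℕ∞) : WithTop ℕ∞) (deriv (deriv (deriv f))) :=
    (contDiff_infty_iff_deriv.mp hf2).2
  have hd0 : ∀ t, HasDerivAt f (deriv f t) t := fun t => (hdf t).hasDerivAt
  have hd1 : ∀ t, HasDerivAt (deriv f) (deriv (deriv f) t) t := fun t =>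
    (hf1.differentiable (by simp) t).hasDerivAt
  have hd2 : ∀ t, HasDerivAt (deriv (deriv f)) (deriv (deriv (deriv f)) t) t := fun t =>
    (hf2.differentiable (by simp) t).hasDerivAt
  have hc3 : Continuous (deriv (deriv (deriv f))) := hf3.continuous
  have hp1 : Function.Periodic (deriv f) T := periodic_deriv' f T hper
  have hp2 : Function.Periodic (deriv (deriv f)) T := periodic_deriv' _ T hp1
  have hp3 : Function.Periodic (deriv (deriv (deriv f))) T := periodic_deriv' _ T hp2
  have hne : ∀ t, ¬(deriv (deriv f) t - f t = x.1 ∧ deriv f t = x.2) := by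
    rintro t ⟨h1, h2⟩
    exact hx ⟨t, by rw [Prod.ext_iff]; exact ⟨h1, h2⟩⟩
  have hkey := winding_core f (deriv f) (deriv (deriv f)) (deriv (deriv (deriv f)))
    x.1 x.2 T hT hd0 hd1 hd2 hc3 hper hp1 hp2 hp3 hne
  unfold windingNumber
  apply mul_nonneg (by positivity)
  have hfun : ∀ t : ℝ,
      ((((fun t => (deriv (deriv f) t - f t, deriv f t)) t).1 - x.1) *
          deriv (fun s => ((fun t => (deriv (deriv f) t - f t, deriv f t)) s).2) t -
        (((fun t => (deriv (deriv f) t - f t, deriv f t)) t).2 - x.2) *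
          deriv (fun s => ((fun t => (deriv (deriv f) t - f t, deriv f t)) s).1) t) /
      ((((fun t => (deriv (deriv f) t - f t, deriv f t)) t).1 - x.1) ^ 2 +
        (((fun t => (deriv (deriv f) t - f t, deriv f t)) t).2 - x.2) ^ 2) =
      ((deriv (deriv f) t - f t - x.1) * deriv (deriv f) t -
        (deriv f t - x.2) * (deriv (deriv (deriv f)) t - deriv f t)) /
      ((deriv (deriv f) t - f t - x.1) ^ 2 + (deriv f t - x.2) ^ 2) := by
    intro t
    have hB : deriv (fun s => ((fun t => (deriv (deriv f) t - f t, deriv f t)) s).1) t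
        = deriv (deriv (deriv f)) t - deriv f t := by
      have h : (fun s => ((fun t => (deriv (deriv f) t - f t, deriv f t)) s).1)
          = fun s => deriv (deriv f) s - f s := rfl
      rw [h]
      exact ((hd2 t).sub (hd0 t)).deriv
    have hA : deriv (fun s => ((fun t => (deriv (deriv f) t - f t, deriv f t)) s).2) t
        = deriv (deriv f) t := rfl
    rw [hA, hB]
  calc (0:ℝ) ≤ _ := hkey
  _ = _ := by
    apply intervalIntegral.integral_congr
    intro t _
    exact (hfun t).symm
end

section
/- Let p(x) = ∏_{i=1}^{n}(x − aᵢ) and q(x) = ∏_{i=1}^{n−1}(x − bᵢ) be monic real polynomials with interlaced real roots a₁ < b₁ < a₂ < ⋯ < b_{n−1} < a_n. Write p(x) = (x − c)q(x) − r(x) by polynomial division with remainder. Then r has a real root in each open interval (bᵢ, b_{i+1}) for i = 1, …, n−2; in particular q and r have interlaced real roots. -/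
/-!
Since `q` vanishes at every `bᵢ`, the remainder satisfies `r(bᵢ) = -p(bᵢ)`. Exactly one root
of `p`, namely `a_{i+1}`, lies between `bᵢ` and `b_{i+1}`, so `p` (hence `r`) takes values of
opposite signs there, and the intermediate value theorem gives a root of `r` in `(bᵢ, b_{i+1})`.
-/

open Polynomial Set

theorem exists_mem_Ioo_eq_zero_of_mul_neg {α : Type*} [ConditionallyCompleteLinearOrder α]
    [TopologicalSpace α] [OrderTopology α] [DenselyOrdered α] {f : α → ℝ} {x y : α}
    (hxy : x ≤ y) (hf : ContinuousOn f (Icc x y)) (hsign : f x * f y < 0) :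
    ∃ z ∈ Ioo x y, f z = 0 := by
  rcases mul_neg_iff.mp hsign with ⟨hx, hy⟩ | ⟨hx, hy⟩
  · exact intermediate_value_Ioo' hxy hf ⟨hy, hx⟩
  · exact intermediate_value_Ioo hxy hf ⟨hx, hy⟩

theorem Polynomial.eval_prod_X_sub_C_mul_eval_neg {R ι : Type*} [CommRing R] [LinearOrder R]
    [IsStrictOrderedRing R] {s : Finset ι} {a : ι → R} {x y : R} {k : ι} (hk : k ∈ s)
    (hneg : (x - a k) * (y - a k) < 0) (hpos : ∀ j ∈ s, j ≠ k → 0 < (x - a j) * (y - a j)) :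
    (∏ j ∈ s, (X - C (a j))).eval x * (∏ j ∈ s, (X - C (a j))).eval y < 0 := by
  classical
  simp only [eval_prod, eval_sub, eval_X, eval_C]
  rw [← Finset.prod_mul_distrib, ← Finset.mul_prod_erase s _ hk]
  exact mul_neg_of_neg_of_pos hneg <| Finset.prod_pos fun j hj ↦
    hpos j (Finset.mem_of_mem_erase hj) (Finset.ne_of_mem_erase hj)

theorem stmt2_general (n : ℕ) (a b : ℕ → ℝ)
    (p q : Polynomial ℝ)
    (hp : p = ∏ i ∈ Finset.range n, (X - C (a i)))
    (hq : q = ∏ i ∈ Finset.range (n - 1), (X - C (b i)))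
    (hinter : ∀ i, i < n - 1 → a i < b i ∧ b i < a (i + 1))
    (c : ℝ) (r : Polynomial ℝ)
    (hdiv : p = (X - C c) * q - r) :
    ∀ i, i + 1 < n - 1 → ∃ x : ℝ, b i < x ∧ x < b (i + 1) ∧ r.eval x = 0 := by
  intro i hi
  have ha : StrictMonoOn a (Iic (n - 1)) :=
    strictMonoOn_Iic_of_lt_succ fun m hm ↦ (hinter m hm).1.trans (hinter m hm).2
  have hr : ∀ m < n - 1, r.eval (b m) = -p.eval (b m) := fun m hm ↦ by
    have hq0 : q.eval (b m) = 0 := by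
      simpa [hq, eval_prod, Finset.prod_eq_zero_iff, sub_eq_zero] using ⟨m, hm, rfl⟩
    simp [hdiv, hq0]
  have ⟨hai, hbi⟩ := hinter i (by omega)
  have ⟨hbi', hai'⟩ := hinter (i + 1) hi
  have hp_sign : p.eval (b i) * p.eval (b (i + 1)) < 0 := by
    rw [hp]
    refine eval_prod_X_sub_C_mul_eval_neg (k := i + 1) (Finset.mem_range.mpr (by omega))
      (mul_neg_of_neg_of_pos (by linarith) (by linarith)) fun j hj hji ↦ ?_
    rw [Finset.mem_range] at hj
    rcases Nat.lt_or_gt_of_ne hji with hlt | hgt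
    · have : a j ≤ a i :=
        ha.monotoneOn (mem_Iic.mpr (by omega)) (mem_Iic.mpr (by omega)) (by omega)
      exact mul_pos (by linarith) (by linarith)
    · have : a (i + 2) ≤ a j :=
        ha.monotoneOn (mem_Iic.mpr (by omega)) (mem_Iic.mpr (by omega)) (by omega)
      exact mul_pos_of_neg_of_neg (by linarith) (by linarith)
  obtain ⟨x, ⟨hx₁, hx₂⟩, hrx⟩ := exists_mem_Ioo_eq_zero_of_mul_neg (f := fun x ↦ r.eval x)
    (x := b i) (y := b (i + 1)) (by linarith) r.continuous.continuousOn
    (by rwa [hr i (by omega), hr (i + 1) hi, neg_mul_neg])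
  exact ⟨x, hx₁, hx₂, hrx⟩

theorem stmt2 (n : ℕ) (hn : 1 ≤ n) (a b : ℕ → ℝ)
    (p q : Polynomial ℝ)
    (hp : p = ∏ i ∈ Finset.range n, (X - C (a i)))
    (hq : q = ∏ i ∈ Finset.range (n - 1), (X - C (b i)))
    (hinter : ∀ i, i < n - 1 → a i < b i ∧ b i < a (i + 1))
    (c : ℝ) (r : Polynomial ℝ)
    (hdiv : p = (X - C c) * q - r) :
    ∀ i, i + 1 < n - 1 → ∃ x : ℝ, b i < x ∧ x < b (i + 1) ∧ r.eval x = 0 :=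
  stmt2_general n a b p q hp hq hinter c r hdiv
end
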